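/- Let $n\in\mathbb{N}$, $\mathbb{F}=\mathbb{F}_4$, and let $H$, $M$, $N$, $G=HM$ be the subgroups of $\mathrm{SL}_{2n}(\mathbb{F})$ defined below. Then $N$ is a normal subgroup of $G$, and for every $d$ with $1\leq d<n$, the subgroup $\gamma_d(N)$ strictly contains $[G,{}^dN]$. -/

import Mathlib

/-- The group `SL₂ₙ(F)`, with rows and columns indexed by `Fin n × Fin 2`, so that
its elements can be viewed as `n × n` block matrices with `2 × 2` blocks. -/
abbrev SL2n (F : Type*) [Field F] [Fintype F] (n : ℕ) : Type _ :=
  Matrix.SpecialLinearGroup (Fin n × Fin 2) F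

/-- The `2 × 2` block of a `2n × 2n` matrix in block position `(i, j)`. -/
def blockOf {F : Type*} [Field F] {n : ℕ}
    (X : Matrix (Fin n × Fin 2) (Fin n × Fin 2) F) (i j : Fin n) :
    Matrix (Fin 2) (Fin 2) F :=
  Matrix.of fun a b => X (i, a) (j, b)

/-- The subgroup `H` of `SL₂ₙ(F)`: block diagonal matrices `Δ(A) = diag(A, …, A)`
with `A ∈ SL₂(F)`. -/
def HsetN (F : Type*) [Field F] [Fintype F] (n : ℕ) : Set (SL2n F n) :=
  {X | ∃ A : Matrix.SpecialLinearGroup (Fin 2) F, ∀ i j : Fin n,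
    blockOf (X : Matrix (Fin n × Fin 2) (Fin n × Fin 2) F) i j =
      if i = j then (A : Matrix (Fin 2) (Fin 2) F) else 0}

/-- The subgroup `M` of `SL₂ₙ(F)`: block upper unitriangular matrices `(A_{ij})`
with `A_{ii} = I`, trace-zero blocks `A_{i,i+1}` on the superdiagonal, arbitrary
blocks above that, and zero blocks below the diagonal. -/
def MsetN (F : Type*) [Field F] [Fintype F] (n : ℕ) : Set (SL2n F n) :=
  {X | (∀ i : Fin n,
          blockOf (X : Matrix (Fin n × Fin 2) (Fin n × Fin 2) F) i i = 1) ∧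
       (∀ i j : Fin n, (j : ℕ) = (i : ℕ) + 1 →
          (blockOf (X : Matrix (Fin n × Fin 2) (Fin n × Fin 2) F) i j).trace = 0) ∧
       (∀ i j : Fin n, (j : ℕ) < (i : ℕ) →
          blockOf (X : Matrix (Fin n × Fin 2) (Fin n × Fin 2) F) i j = 0)}

/-- The subgroup `N` of `SL₂ₙ(F)`: elements of `M` whose superdiagonal blocks are
scalar matrices `a_i • I`. -/
def NsetN (F : Type*) [Field F] [Fintype F] (n : ℕ) : Set (SL2n F n) :=
  {X | (∀ i : Fin n,
          blockOf (X : Matrix (Fin n × Fin 2) (Fin n × Fin 2) F) i i = 1) ∧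
       (∀ i j : Fin n, (j : ℕ) = (i : ℕ) + 1 → ∃ a : F,
          blockOf (X : Matrix (Fin n × Fin 2) (Fin n × Fin 2) F) i j =
            a • (1 : Matrix (Fin 2) (Fin 2) F)) ∧
       (∀ i j : Fin n, (j : ℕ) < (i : ℕ) →
          blockOf (X : Matrix (Fin n × Fin 2) (Fin n × Fin 2) F) i j = 0)}

/-- The group `G = HM`, i.e. the subgroup of `SL₂ₙ(F)` generated by `H ∪ M`. -/
def GsubN (F : Type*) [Field F] [Fintype F] (n : ℕ) : Subgroup (SL2n F n) :=
  Subgroup.closure (HsetN F n ∪ MsetN F n)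

/-- The left-normed iterated commutator subgroup `[G, ᵐN]` for subgroups `G, N` of
an ambient group: `[G, ⁰N] = G` and `[G, ᵐ⁺¹N] = [[G, ᵐN], N]`. -/
def iterCommG {P : Type*} [Group P] (G N : Subgroup P) : ℕ → Subgroup P
  | 0 => G
  | m + 1 => ⁅iterCommG G N m, N⁆

/-- The lower central series of a subgroup `N`, as subgroups of the ambient group:
`γ₁(N) = N` is `gammaN N 0`, and `γ_{k+1}(N) = [γ_k(N), N]` is `gammaN N k`. -/
def gammaN {P : Type*} [Group P] (N : Subgroup P) : ℕ → Subgroup P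
  | 0 => N
  | k + 1 => ⁅gammaN N k, N⁆

/-!
The block upper unitriangular group is filtered by the subgroups `Z_e = blockUnitriangular F n e`
of elements whose first `e` block superdiagonals vanish; modulo `Z_1` the superdiagonal blocks
add, and commutators with block unitriangular elements push `Z_e` into `Z_{e+1}`. In particular
`N` is a submonoid, hence a subgroup of the finite group `SL₂ₙ(𝔽)`. Both generating sets of `G`
conjugate `N` into itself without changing superdiagonal blocks (for `Δ(A)` because those blocks
are scalar), so `[G, N] ≤ N ∩ Z_1` and `[G, ᵈN] ≤ γ_d(N) ∩ Z_d`. On the other hand the Steinberg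
relation `[t_{ij}(1), t_{jk}(1)] = t_{ik}(1)` for transvections, tensored with `I₂`, puts
`t_{0,d}(1) ⊗ I₂ ∉ Z_d` into `γ_d(N)`.
-/

open Matrix
open scoped Kronecker commutatorElement

section FiniteGroup

variable {G : Type*} [Group G] [Finite G]

theorem Subgroup.coe_closure_submonoid_of_finite (S : Submonoid G) :
    (Subgroup.closure (S : Set G) : Set G) = S := by
  rw [← Subgroup.coe_toSubmonoid, Subgroup.closure_toSubmonoid_of_finite, Submonoid.closure_eq]

def Submonoid.toSubgroupOfFinite (S : Submonoid G) : Subgroup G where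
  toSubmonoid := S
  inv_mem' {x} hx := by
    show x⁻¹ ∈ (S : Set G)
    rw [← Subgroup.coe_closure_submonoid_of_finite]
    exact inv_mem (Subgroup.subset_closure hx)

end FiniteGroup

theorem iterCommG_succ_le_gammaN {P : Type*} [Group P] {G N : Subgroup P} (h : ⁅G, N⁆ ≤ N)
    (e : ℕ) : iterCommG G N (e + 1) ≤ gammaN N e := by
  induction e with
  | zero => exact h
  | succ e ih => exact Subgroup.commutator_mono ih le_rfl

namespace Matrix.SpecialLinearGroup

variable {m k R : Type*} [Fintype m] [DecidableEq m] [Fintype k] [DecidableEq k] [CommRing R]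

def kroneckerOne : SpecialLinearGroup m R →* SpecialLinearGroup (m × k) R where
  toFun A := ⟨(A : Matrix m m R) ⊗ₖ (1 : Matrix k k R), by simp [det_kronecker]⟩
  map_one' := Subtype.ext one_kronecker_one
  map_mul' A B := Subtype.ext <|
    show ((A * B : Matrix m m R)) ⊗ₖ (1 : Matrix k k R) = (A ⊗ₖ 1) * (B ⊗ₖ 1) by
      rw [← mul_kronecker_mul, mul_one]

def oneKronecker : SpecialLinearGroup k R →* SpecialLinearGroup (m × k) R where
  toFun A := ⟨(1 : Matrix m m R) ⊗ₖ (A : Matrix k k R), by simp [det_kronecker]⟩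
  map_one' := Subtype.ext one_kronecker_one
  map_mul' A B := Subtype.ext <|
    show (1 : Matrix m m R) ⊗ₖ ((A * B : Matrix k k R)) = (1 ⊗ₖ A) * (1 ⊗ₖ B) by
      rw [← mul_kronecker_mul, mul_one]

theorem coe_oneKronecker (A : SpecialLinearGroup k R) :
    ((oneKronecker A : SpecialLinearGroup (m × k) R) : Matrix (m × k) (m × k) R) =
      1 ⊗ₖ (A : Matrix k k R) :=
  rfl

theorem commutator_transvection {i j l : m} (hij : i ≠ j) (hjl : j ≠ l) (hil : i ≠ l) (c d : R) :
    ⁅transvection hij c, transvection hjl d⁆ = transvection hil (c * d) := by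
  refine Subtype.ext ?_
  simp only [commutatorElement_def, transvection_inv, coe_mul, transvection_coe]
  simp only [add_mul, mul_add, one_mul, mul_one, single_mul_single_same,
    single_mul_single_of_ne _ _ _ _ hjl.symm, single_mul_single_of_ne _ _ _ _ hil.symm,
    single_mul_single_of_ne _ _ _ _ hij.symm, add_zero, mul_neg, neg_mul, ← single_neg]
  abel

end Matrix.SpecialLinearGroup

section Blocks

variable {F : Type*} [Field F] {n : ℕ}

theorem blockOf_ext {X Y : Matrix (Fin n × Fin 2) (Fin n × Fin 2) F}
    (h : ∀ i j, blockOf X i j = blockOf Y i j) : X = Y := by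
  ext ⟨i, a⟩ ⟨j, b⟩
  exact congrFun₂ (h i j) a b

theorem blockOf_mul (X Y : Matrix (Fin n × Fin 2) (Fin n × Fin 2) F) (i j : Fin n) :
    blockOf (X * Y) i j = ∑ k, blockOf X i k * blockOf Y k j := by
  ext a b
  simp only [blockOf, of_apply, mul_apply, Matrix.sum_apply, Fintype.sum_prod_type]

theorem blockOf_one (i j : Fin n) :
    blockOf (1 : Matrix (Fin n × Fin 2) (Fin n × Fin 2) F) i j = if i = j then 1 else 0 := by
  ext a b
  by_cases h : i = j <;> simp [blockOf, one_apply, h]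

theorem blockOf_kronecker (A : Matrix (Fin n) (Fin n) F) (B : Matrix (Fin 2) (Fin 2) F)
    (i j : Fin n) : blockOf (A ⊗ₖ B) i j = A i j • B := by
  ext a b
  simp [blockOf]

theorem blockOf_one_kronecker_mul (A : Matrix (Fin 2) (Fin 2) F)
    (X : Matrix (Fin n × Fin 2) (Fin n × Fin 2) F) (i j : Fin n) :
    blockOf ((1 ⊗ₖ A) * X) i j = A * blockOf X i j := by
  simp [blockOf_mul, blockOf_kronecker, one_apply, ite_smul]

theorem blockOf_mul_one_kronecker (A : Matrix (Fin 2) (Fin 2) F)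
    (X : Matrix (Fin n × Fin 2) (Fin n × Fin 2) F) (i j : Fin n) :
    blockOf (X * (1 ⊗ₖ A)) i j = blockOf X i j * A := by
  simp [blockOf_mul, blockOf_kronecker, one_apply, ite_smul]

variable [Fintype F]

/-- `blockOf` for elements of `SL2n`; stating lemmas through it avoids rewriting under the
coercion to matrices. -/
def slBlock (x : SL2n F n) (i j : Fin n) : Matrix (Fin 2) (Fin 2) F :=
  blockOf (x : Matrix (Fin n × Fin 2) (Fin n × Fin 2) F) i j

theorem slBlock_mul (x y : SL2n F n) (i j : Fin n) :
    slBlock (x * y) i j = ∑ k, slBlock x i k * slBlock y k j :=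
  blockOf_mul _ _ i j

theorem slBlock_one (i j : Fin n) : slBlock (1 : SL2n F n) i j = if i = j then 1 else 0 :=
  blockOf_one i j

theorem slBlock_kroneckerOne (A : SpecialLinearGroup (Fin n) F) (i j : Fin n) :
    slBlock (SpecialLinearGroup.kroneckerOne A : SL2n F n) i j = A i j • 1 :=
  blockOf_kronecker _ _ i j

theorem slBlock_oneKronecker_conj (A : SpecialLinearGroup (Fin 2) F) (x : SL2n F n)
    (i j : Fin n) :
    slBlock (SpecialLinearGroup.oneKronecker A * x * (SpecialLinearGroup.oneKronecker A)⁻¹) i j =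
      (A : Matrix (Fin 2) (Fin 2) F) * slBlock x i j *
        ((A⁻¹ : SpecialLinearGroup (Fin 2) F) : Matrix (Fin 2) (Fin 2) F) := by
  rw [← map_inv]
  exact (blockOf_mul_one_kronecker _ _ i j).trans
    (congrArg (· * _) (blockOf_one_kronecker_mul _ _ i j))

end Blocks

section BlockUnitriangular

variable {F : Type*} [Field F] [Fintype F] {n : ℕ}

/-- `x` is block upper unitriangular and its first `e` block superdiagonals vanish. -/
def IsBlockUnitriangular (e : ℕ) (x : SL2n F n) : Prop :=
  ∀ i j : Fin n, (j : ℕ) ≤ i + e → slBlock x i j = if i = j then 1 else 0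

theorem isBlockUnitriangular_one (e : ℕ) : IsBlockUnitriangular e (1 : SL2n F n) :=
  fun i j _ => slBlock_one i j

namespace IsBlockUnitriangular

variable {e f : ℕ} {x y : SL2n F n}

theorem mono (hx : IsBlockUnitriangular e x) {e' : ℕ} (h : e' ≤ e) :
    IsBlockUnitriangular e' x :=
  fun i j hj => hx i j (by omega)

theorem slBlock_mul_of_ne (hx : IsBlockUnitriangular e x) (hy : IsBlockUnitriangular f y)
    {i j : Fin n} (hij : i ≠ j) (hj : (j : ℕ) ≤ i + e + f + 1) :
    slBlock (x * y) i j = slBlock x i j + slBlock y i j := by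
  rw [slBlock_mul, ← Finset.sum_subset (Finset.subset_univ {i, j}), Finset.sum_pair hij,
    hx i i (by omega), hy j j (by omega), if_pos rfl, if_pos rfl, one_mul, mul_one, add_comm]
  intro k _ hk
  simp only [Finset.mem_insert, Finset.mem_singleton, not_or] at hk
  by_cases hki : (k : ℕ) ≤ i + e
  · rw [hx i k hki, if_neg (Ne.symm hk.1), zero_mul]
  · rw [hy k j (by omega), if_neg hk.2, mul_zero]

theorem slBlock_mul_self (hx : IsBlockUnitriangular 0 x) (hy : IsBlockUnitriangular 0 y)
    (i : Fin n) : slBlock (x * y) i i = 1 := by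
  rw [slBlock_mul, Finset.sum_eq_single i (fun k _ hk => ?_) (by simp),
    hx i i (by omega), hy i i (by omega), if_pos rfl, one_mul]
  rcases le_or_gt (k : ℕ) i with hki | hki
  · rw [hx i k (by omega), if_neg (Ne.symm hk), zero_mul]
  · rw [hy k i (by omega), if_neg hk, mul_zero]

theorem mul (hx : IsBlockUnitriangular e x) (hy : IsBlockUnitriangular e y) :
    IsBlockUnitriangular e (x * y) := by
  intro i j hj
  rcases eq_or_ne i j with rfl | hij
  · rw [if_pos rfl, slBlock_mul_self (hx.mono (Nat.zero_le e)) (hy.mono (Nat.zero_le e))]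
  · rw [hx.slBlock_mul_of_ne hy hij (by omega), hx i j hj, hy i j hj, if_neg hij, add_zero]

end IsBlockUnitriangular

variable (F n) in
def blockUnitriangular (e : ℕ) : Subgroup (SL2n F n) :=
  Submonoid.toSubgroupOfFinite
    { carrier := {x | IsBlockUnitriangular e x}
      one_mem' := isBlockUnitriangular_one e
      mul_mem' := IsBlockUnitriangular.mul }

theorem mem_blockUnitriangular_zero {x : SL2n F n} (hdiag : ∀ i, slBlock x i i = 1)
    (hlow : ∀ i j : Fin n, (j : ℕ) < i → slBlock x i j = 0) :
    x ∈ blockUnitriangular F n 0 := by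
  intro i j hj
  rcases eq_or_ne i j with rfl | hij
  · exact (hdiag i).trans (if_pos rfl).symm
  · exact (hlow i j (lt_of_le_of_ne (by omega) (Fin.val_ne_of_ne hij.symm))).trans
      (if_neg hij).symm

theorem blockUnitriangular_antitone : Antitone (blockUnitriangular F n) :=
  fun _ _ h _ hx => IsBlockUnitriangular.mono hx h

theorem mul_inv_mem_blockUnitriangular {e : ℕ} {u v : SL2n F n}
    (hv : v ∈ blockUnitriangular F n 0)
    (h : ∀ i j : Fin n, (j : ℕ) ≤ i + e → slBlock u i j = slBlock v i j) :
    u * v⁻¹ ∈ blockUnitriangular F n e := by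
  have hv' : IsBlockUnitriangular 0 v⁻¹ := inv_mem hv
  intro i j hj
  calc slBlock (u * v⁻¹) i j
      = ∑ k, slBlock u i k * slBlock v⁻¹ k j := slBlock_mul _ _ i j
    _ = ∑ k, slBlock v i k * slBlock v⁻¹ k j := by
        refine Finset.sum_congr rfl fun k _ => ?_
        rcases le_or_gt (k : ℕ) j with hkj | hkj
        · rw [h i k (by omega)]
        · rw [hv' k j (by omega), if_neg (Fin.ne_of_val_ne hkj.ne'), mul_zero, mul_zero]
    _ = if i = j then 1 else 0 := by
        rw [← slBlock_mul, mul_inv_cancel, slBlock_one]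

theorem commutatorElement_mem_blockUnitriangular {e : ℕ} {a b : SL2n F n}
    (ha : a ∈ blockUnitriangular F n e) (hb : b ∈ blockUnitriangular F n 0) :
    ⁅a, b⁆ ∈ blockUnitriangular F n (e + 1) := by
  have ha₀ : a ∈ blockUnitriangular F n 0 := blockUnitriangular_antitone (Nat.zero_le e) ha
  rw [show ⁅a, b⁆ = a * b * (b * a)⁻¹ by group]
  refine mul_inv_mem_blockUnitriangular (mul_mem hb ha₀) fun i j hj => ?_
  rcases eq_or_ne i j with rfl | hij
  · rw [IsBlockUnitriangular.slBlock_mul_self ha₀ hb,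
      IsBlockUnitriangular.slBlock_mul_self hb ha₀]
  · rw [IsBlockUnitriangular.slBlock_mul_of_ne ha hb hij (by omega),
      IsBlockUnitriangular.slBlock_mul_of_ne hb ha hij (by omega), add_comm]

end BlockUnitriangular

section Subgroups

variable {F : Type*} [Field F] [Fintype F] {n : ℕ}

open Matrix.SpecialLinearGroup (kroneckerOne oneKronecker)

theorem mem_NsetN_iff {x : SL2n F n} :
    x ∈ NsetN F n ↔ x ∈ blockUnitriangular F n 0 ∧
      ∀ i j : Fin n, (j : ℕ) = i + 1 → ∃ a : F, slBlock x i j = a • 1 := by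
  refine ⟨fun ⟨hdiag, hsup, hlow⟩ => ⟨mem_blockUnitriangular_zero hdiag hlow, hsup⟩,
    fun ⟨hx, hsup⟩ => ⟨fun i => ?_, hsup, fun i j hj => ?_⟩⟩
  · exact (hx i i (by omega)).trans (if_pos rfl)
  · exact (hx i j (by omega)).trans (if_neg (Fin.ne_of_val_ne (by omega)))

theorem MsetN_subset_blockUnitriangular : MsetN F n ⊆ blockUnitriangular F n 0 := by
  rintro x ⟨hdiag, -, hlow⟩
  exact mem_blockUnitriangular_zero hdiag hlow

variable (F n) in
def NsetN.submonoid : Submonoid (SL2n F n) where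
  carrier := NsetN F n
  one_mem' := mem_NsetN_iff.mpr ⟨one_mem _, fun i j hj =>
    ⟨0, by rw [slBlock_one, if_neg (Fin.ne_of_val_ne (by omega)), zero_smul]⟩⟩
  mul_mem' {x y} hx hy := by
    obtain ⟨hx₀, hxs⟩ := mem_NsetN_iff.mp hx
    obtain ⟨hy₀, hys⟩ := mem_NsetN_iff.mp hy
    refine mem_NsetN_iff.mpr ⟨mul_mem hx₀ hy₀, fun i j hj => ?_⟩
    obtain ⟨a, ha⟩ := hxs i j hj
    obtain ⟨b, hb⟩ := hys i j hj
    exact ⟨a + b, by rw [IsBlockUnitriangular.slBlock_mul_of_ne hx₀ hy₀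
      (Fin.ne_of_val_ne (by omega)) (by omega), ha, hb, add_smul]⟩

theorem coe_closure_NsetN : (Subgroup.closure (NsetN F n) : Set (SL2n F n)) = NsetN F n :=
  Subgroup.coe_closure_submonoid_of_finite (NsetN.submonoid F n)

theorem mem_closure_NsetN {x : SL2n F n} : x ∈ Subgroup.closure (NsetN F n) ↔ x ∈ NsetN F n := by
  rw [← SetLike.mem_coe, coe_closure_NsetN]

theorem closure_NsetN_le_blockUnitriangular :
    Subgroup.closure (NsetN F n) ≤ blockUnitriangular F n 0 :=
  (Subgroup.closure_le _).mpr fun _ hx => (mem_NsetN_iff.mp hx).1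

variable (F n) in
def superdiagFixer : Subgroup (SL2n F n) :=
  Submonoid.toSubgroupOfFinite
    { carrier := {g | ∀ x ∈ NsetN F n, g * x * g⁻¹ ∈ NsetN F n ∧
        ∀ i j : Fin n, (j : ℕ) = i + 1 → slBlock (g * x * g⁻¹) i j = slBlock x i j}
      one_mem' := fun x hx => by simpa using hx
      mul_mem' := fun {g h} hg hh x hx => by
        obtain ⟨hmem, hsup⟩ := hh x hx
        obtain ⟨hmem', hsup'⟩ := hg _ hmem
        rw [show g * h * x * (g * h)⁻¹ = g * (h * x * h⁻¹) * g⁻¹ by group]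
        exact ⟨hmem', fun i j hj => (hsup' i j hj).trans (hsup i j hj)⟩ }

theorem blockUnitriangular_le_superdiagFixer :
    blockUnitriangular F n 0 ≤ superdiagFixer F n := by
  intro g hg x hx
  obtain ⟨hx₀, hxs⟩ := mem_NsetN_iff.mp hx
  have hsup : ∀ i j : Fin n, (j : ℕ) = i + 1 → slBlock (g * x * g⁻¹) i j = slBlock x i j := by
    intro i j hj
    have hij : i ≠ j := Fin.ne_of_val_ne (by omega)
    have hcancel : slBlock g i j + slBlock g⁻¹ i j = 0 := by
      rw [← IsBlockUnitriangular.slBlock_mul_of_ne hg (inv_mem hg) hij (by omega),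
        mul_inv_cancel, slBlock_one, if_neg hij]
    rw [IsBlockUnitriangular.slBlock_mul_of_ne (mul_mem hg hx₀) (inv_mem hg) hij (by omega),
      IsBlockUnitriangular.slBlock_mul_of_ne hg hx₀ hij (by omega), add_right_comm, hcancel,
      zero_add]
  refine ⟨mem_NsetN_iff.mpr ⟨mul_mem (mul_mem hg hx₀) (inv_mem hg), fun i j hj => ?_⟩, hsup⟩
  rw [hsup i j hj]
  exact hxs i j hj

theorem oneKronecker_mem_superdiagFixer (A : SpecialLinearGroup (Fin 2) F) :
    (oneKronecker A : SL2n F n) ∈ superdiagFixer F n := by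
  have hunit : (A : Matrix (Fin 2) (Fin 2) F) * 1 *
      ((A⁻¹ : SpecialLinearGroup (Fin 2) F) : Matrix (Fin 2) (Fin 2) F) = 1 := by
    rw [mul_one, ← Matrix.SpecialLinearGroup.coe_mul, mul_inv_cancel,
      Matrix.SpecialLinearGroup.coe_one]
  have hscalar : ∀ a : F, (A : Matrix (Fin 2) (Fin 2) F) * (a • 1) *
      ((A⁻¹ : SpecialLinearGroup (Fin 2) F) : Matrix (Fin 2) (Fin 2) F) = a • 1 := fun a => by
    rw [mul_smul_comm, smul_mul_assoc, hunit]
  rintro x ⟨hdiag, hsup, hlow⟩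
  have hsup' : ∀ i j : Fin n, (j : ℕ) = i + 1 →
      slBlock (oneKronecker A * x * (oneKronecker A)⁻¹) i j = slBlock x i j := by
    intro i j hj
    obtain ⟨a, ha⟩ := hsup i j hj
    rw [slBlock_oneKronecker_conj, show slBlock x i j = a • 1 from ha, hscalar]
  refine ⟨⟨fun i => ?_, fun i j hj => ?_, fun i j hj => ?_⟩, hsup'⟩
  · change slBlock _ i i = 1
    rw [slBlock_oneKronecker_conj, show slBlock x i i = 1 from hdiag i, hunit]
  · obtain ⟨a, ha⟩ := hsup i j hj
    exact ⟨a, (hsup' i j hj).trans ha⟩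
  · change slBlock _ i j = 0
    rw [slBlock_oneKronecker_conj, show slBlock x i j = 0 from hlow i j hj, mul_zero, zero_mul]

theorem HsetN_subset_range_oneKronecker : HsetN F n ⊆ Set.range oneKronecker := by
  rintro g ⟨A, hA⟩
  refine ⟨A, Subtype.ext (blockOf_ext fun i j => ?_)⟩
  rw [hA, Matrix.SpecialLinearGroup.coe_oneKronecker, blockOf_kronecker, one_apply, ite_smul,
    one_smul, zero_smul]

theorem GsubN_le_superdiagFixer : GsubN F n ≤ superdiagFixer F n := by
  rw [GsubN, Subgroup.closure_le]
  rintro g (hg | hg)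
  · obtain ⟨A, rfl⟩ := HsetN_subset_range_oneKronecker hg
    exact oneKronecker_mem_superdiagFixer A
  · exact blockUnitriangular_le_superdiagFixer (MsetN_subset_blockUnitriangular hg)

end Subgroups

section LowerCentralSeries

variable {F : Type*} [Field F] [Fintype F] {n : ℕ}

open Matrix.SpecialLinearGroup (kroneckerOne transvection)

theorem commutator_GsubN_closure_NsetN_le :
    ⁅GsubN F n, Subgroup.closure (NsetN F n)⁆ ≤ Subgroup.closure (NsetN F n) := by
  rw [Subgroup.commutator_le]
  intro g hg x hx
  rw [commutatorElement_def]
  exact mul_mem (Subgroup.subset_closure (GsubN_le_superdiagFixer hg x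
    (mem_closure_NsetN.mp hx)).1) (inv_mem hx)

theorem commutator_GsubN_closure_NsetN_le_blockUnitriangular :
    ⁅GsubN F n, Subgroup.closure (NsetN F n)⁆ ≤ blockUnitriangular F n 1 := by
  rw [Subgroup.commutator_le]
  intro g hg x hx
  have hxN := mem_closure_NsetN.mp hx
  obtain ⟨hconj, hsup⟩ := GsubN_le_superdiagFixer hg x hxN
  rw [commutatorElement_def]
  refine mul_inv_mem_blockUnitriangular (mem_NsetN_iff.mp hxN).1 fun i j hj => ?_
  rcases Nat.lt_or_ge (i : ℕ) j with hij | hij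
  · exact hsup i j (by omega)
  · rw [(mem_NsetN_iff.mp hconj).1 i j (by omega), (mem_NsetN_iff.mp hxN).1 i j (by omega)]

theorem iterCommG_le_blockUnitriangular (e : ℕ) :
    iterCommG (GsubN F n) (Subgroup.closure (NsetN F n)) (e + 1) ≤
      blockUnitriangular F n (e + 1) := by
  induction e with
  | zero => exact commutator_GsubN_closure_NsetN_le_blockUnitriangular
  | succ e ih =>
    rw [iterCommG, Subgroup.commutator_le]
    exact fun a ha b hb => commutatorElement_mem_blockUnitriangular (ih ha)
      (closure_NsetN_le_blockUnitriangular hb)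

theorem kroneckerOne_mem_NsetN {A : SpecialLinearGroup (Fin n) F} (hdiag : ∀ i, A i i = 1)
    (hlow : ∀ i j, j < i → A i j = 0) : (kroneckerOne A : SL2n F n) ∈ NsetN F n :=
  ⟨fun i => (slBlock_kroneckerOne A i i).trans (by rw [hdiag, one_smul]),
    fun i j _ => ⟨A i j, slBlock_kroneckerOne A i j⟩,
    fun i j hj => (slBlock_kroneckerOne A i j).trans (by rw [hlow i j hj, zero_smul])⟩

theorem kroneckerOne_transvection_mem_NsetN {i j : Fin n} (hij : i ≠ j) (hj : (j : ℕ) = i + 1)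
    (c : F) : (kroneckerOne (transvection hij c) : SL2n F n) ∈ NsetN F n := by
  refine kroneckerOne_mem_NsetN (fun k => ?_) (fun k l hkl => ?_) <;>
    simp only [Matrix.SpecialLinearGroup.transvection_coe, Matrix.add_apply, one_apply_eq,
      single_apply, add_eq_left, ite_eq_right_iff, and_imp]
  · rintro rfl rfl
    exact absurd rfl hij
  · rw [one_apply_ne hkl.ne', if_neg, zero_add]
    rintro ⟨rfl, rfl⟩
    rw [Fin.lt_def] at hkl
    omega

theorem kroneckerOne_transvection_mem_gammaN (k : ℕ) {i j : Fin n} (hij : i ≠ j)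
    (hj : (j : ℕ) = i + k + 1) :
    (kroneckerOne (transvection hij 1) : SL2n F n) ∈ gammaN (Subgroup.closure (NsetN F n)) k := by
  induction k generalizing j with
  | zero => exact Subgroup.subset_closure (kroneckerOne_transvection_mem_NsetN hij hj 1)
  | succ k ih =>
    let m : Fin n := ⟨j - 1, by omega⟩
    have hm : (m : ℕ) = j - 1 := rfl
    have him : i ≠ m := Fin.ne_of_val_ne (by omega)
    have hmj : m ≠ j := Fin.ne_of_val_ne (by omega)
    have h := Subgroup.commutator_mem_commutator (ih him (by omega))
      (Subgroup.subset_closure (kroneckerOne_transvection_mem_NsetN hmj (by omega) 1))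
    rwa [← map_commutatorElement, Matrix.SpecialLinearGroup.commutator_transvection him hmj hij,
      one_mul] at h

theorem kroneckerOne_transvection_not_mem_blockUnitriangular {e : ℕ} {i j : Fin n}
    (hij : i ≠ j) (hj : (j : ℕ) ≤ i + e) {c : F} (hc : c ≠ 0) :
    (kroneckerOne (transvection hij c) : SL2n F n) ∉ blockUnitriangular F n e := by
  intro h
  have hblock := h i j hj
  rw [slBlock_kroneckerOne, if_neg hij, Matrix.SpecialLinearGroup.transvection_coe,
    Matrix.add_apply, one_apply_ne hij, single_apply_same, zero_add, smul_eq_zero] at hblock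
  exact hblock.elim hc one_ne_zero

end LowerCentralSeries

theorem NsetN_normal_and_gamma_gt_iterComm_general
    (F : Type*) [Field F] [Fintype F]
    (n : ℕ) :
    ((Subgroup.closure (NsetN F n) : Set (SL2n F n)) = NsetN F n) ∧
    (∀ g ∈ GsubN F n, ∀ x ∈ NsetN F n, g * x * g⁻¹ ∈ NsetN F n) ∧
    ∀ d : ℕ, 1 ≤ d → d < n →
      iterCommG (GsubN F n) (Subgroup.closure (NsetN F n)) d <
        gammaN (Subgroup.closure (NsetN F n)) (d - 1) := by
  refine ⟨coe_closure_NsetN, fun g hg x hx => (GsubN_le_superdiagFixer hg x hx).1,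
    fun d hd hdn => ?_⟩
  obtain ⟨e, rfl⟩ : ∃ e, d = e + 1 := ⟨d - 1, by omega⟩
  rw [Nat.add_sub_cancel]
  have hij : (⟨0, by omega⟩ : Fin n) ≠ ⟨e + 1, hdn⟩ := Fin.ne_of_val_ne (by simp)
  refine lt_of_le_not_ge (iterCommG_succ_le_gammaN commutator_GsubN_closure_NsetN_le e)
    fun hle => ?_
  have hmem := kroneckerOne_transvection_mem_gammaN (F := F) e hij (by simp)
  exact kroneckerOne_transvection_not_mem_blockUnitriangular hij (by simp) one_ne_zero
    (iterCommG_le_blockUnitriangular e (hle hmem))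

/-- **Lemma SL2n (3),(4).** `N` is a normal subgroup of `G = HM ≤ SL₂ₙ(𝔽₄)`
(the set `N` coincides with the subgroup it generates and is normalized by every
element of `G`), and for every `d` with `1 ≤ d < n` the subgroup `γ_d(N)` strictly
contains `[G, ᵈN]`. -/
theorem NsetN_normal_and_gamma_gt_iterComm
    (F : Type*) [Field F] [Fintype F] (hF : Fintype.card F = 4)
    (n : ℕ) (hn : 0 < n) :
    ((Subgroup.closure (NsetN F n) : Set (SL2n F n)) = NsetN F n) ∧
    (∀ g ∈ GsubN F n, ∀ x ∈ NsetN F n, g * x * g⁻¹ ∈ NsetN F n) ∧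
    ∀ d : ℕ, 1 ≤ d → d < n →
      iterCommG (GsubN F n) (Subgroup.closure (NsetN F n)) d <
        gammaN (Subgroup.closure (NsetN F n)) (d - 1) :=
  NsetN_normal_and_gamma_gt_iterComm_general F n
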